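/- arXiv:1906.11071 — 3 statements merged into one kernel-verified Lean document; each statement's English description precedes it below -/
import Mathlib

section
/- Suppose {α_i} and {μ_i} are such that Condition (*) holds (so that T_f is a bounded linear operator). If limsup_{i→∞} η_i = 1, then the composition operator T_f : L^p(μ) → L^p(μ) is topologically transitive. -/
/-!
Functions of finitely many initial digits are dense in `L^p(μ)`, so let `φ` and `ψ` be
represented by functions `F` and `G` of the digits below `n`. As `limsup η_i = 1`, some digit
`i ≥ n` takes one value `b` with probability `> 1 - δ`. For `k = α_0 ⋯ α_{i-1}`, `f^k` fixes the
digits below `i` and adds `1` to digit `i`. With `E = {x_i = b + 1}` and `D = {x_i = b}`, the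
point `u = φ + 1_E (G - F)` is close to `φ` because `μ E < δ`, while `T^k u = F + 1_D (G - F)`
is close to `ψ` because `μ Dᶜ < δ`.
-/

open MeasureTheory Filter Set Topology ENNReal NNReal

noncomputable section

/-- The odometer (the "+1" map, with carry over to the right) on `Π i, Fin (α i)`. -/
def odometer (α : ℕ → ℕ) (x : ∀ i, Fin (α i)) : ∀ i, Fin (α i) :=
  fun i =>
    if ∀ j < i, ((x j : ℕ) + 1 = α j)
    then ⟨((x i : ℕ) + 1) % α i, Nat.mod_lt _ (x i).pos⟩
    else x i

/-- Topological transitivity of a self-map of a topological space. -/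
def TopTransitive {X : Type*} [TopologicalSpace X] (T : X → X) : Prop :=
  ∀ U V : Set X, IsOpen U → IsOpen V → U.Nonempty → V.Nonempty →
    ∃ k : ℕ, 1 ≤ k ∧ (T^[k] '' U ∩ V).Nonempty

/-- Topological mixing of a self-map of a topological space. -/
def TopMixing {X : Type*} [TopologicalSpace X] (T : X → X) : Prop :=
  ∀ U V : Set X, IsOpen U → IsOpen V → U.Nonempty → V.Nonempty →
    ∃ k₀ : ℕ, 1 ≤ k₀ ∧ ∀ k ≥ k₀, (T^[k] '' U ∩ V).Nonempty

/-- `μ` is the product of the probability measures on the coordinates `Fin (α i)` given by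
the weights `w i`: every basic cylinder has measure the product of the weights. -/
def IsProductMeasure (α : ℕ → ℕ) (w : ∀ i, Fin (α i) → NNReal)
    (μ : Measure (∀ i, Fin (α i))) : Prop :=
  ∀ (n : ℕ) (a : ∀ i : Fin n, Fin (α i.1)),
    μ {x | ∀ i : Fin n, x i.1 = a i} = ∏ i : Fin n, (w i.1 (a i) : ENNReal)

/-- Condition (*): there is `c > 0` with `μ B ≥ c • μ (g ⁻¹ B)` for all measurable `B`. -/
def CondStar {X : Type*} [MeasurableSpace X] (μ : Measure X) (g : X → X) : Prop :=
  ∃ c : ℝ, 0 < c ∧ ∀ B : Set X, MeasurableSet B →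
    ENNReal.ofReal c * μ (g ⁻¹' B) ≤ μ B

theorem topTransitive_of_dense {X : Type*} [PseudoMetricSpace X] {T : X → X} {S : Set X}
    (hS : Dense S)
    (h : ∀ φ ∈ S, ∀ ψ ∈ S, ∀ ε > 0, ∃ k, 1 ≤ k ∧ ∃ u, dist u φ ≤ ε ∧ dist (T^[k] u) ψ ≤ ε) :
    TopTransitive T := by
  intro U V hU hV hUne hVne
  obtain ⟨φ, hφU, hφS⟩ := hS.inter_open_nonempty U hU hUne
  obtain ⟨ψ, hψV, hψS⟩ := hS.inter_open_nonempty V hV hVne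
  obtain ⟨ε₁, hε₁, hballU⟩ := Metric.isOpen_iff.mp hU φ hφU
  obtain ⟨ε₂, hε₂, hballV⟩ := Metric.isOpen_iff.mp hV ψ hψV
  obtain ⟨k, hk, u, hu, hTu⟩ := h φ hφS ψ hψS (min ε₁ ε₂ / 2) (by positivity)
  have hε : min ε₁ ε₂ / 2 < min ε₁ ε₂ := half_lt_self (lt_min hε₁ hε₂)
  refine ⟨k, hk, T^[k] u, mem_image_of_mem _ (hballU ?_), hballV ?_⟩
  · exact Metric.mem_ball.mpr (hu.trans_lt (hε.trans_le (min_le_left _ _)))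
  · exact Metric.mem_ball.mpr (hTu.trans_lt (hε.trans_le (min_le_right _ _)))

theorem DependsOn.finite_range {ι : Type*} {α : ι → Type*} [∀ i, Finite (α i)] {β : Type*}
    [Nonempty β] {f : (∀ i, α i) → β} {s : Set ι} [Finite s] (hf : DependsOn f s) :
    (range f).Finite := by
  obtain ⟨g, rfl⟩ := dependsOn_iff_exists_comp.mp hf
  exact (Set.finite_range g).subset (range_comp_subset_range _ _)

section CompositionOperator

variable {X : Type*} [MeasurableSpace X] {μ : Measure X} {g : X → X}

theorem CondStar.tendsto_ae (hg : CondStar μ g) : Tendsto g (ae μ) (ae μ) := by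
  obtain ⟨c, hc, hcg⟩ := hg
  intro s hs
  obtain ⟨t, hst, ht, htμ⟩ := exists_measurable_superset_of_null (mem_ae_iff.mp hs)
  have : ENNReal.ofReal c * μ (g ⁻¹' t) = 0 := le_antisymm (htμ ▸ hcg t ht) zero_le
  refine mem_ae_iff.mpr (measure_mono_null (preimage_mono hst) ?_)
  exact (mul_eq_zero.mp this).resolve_left (ENNReal.ofReal_pos.mpr hc).ne'

variable {p : ℝ≥0∞} [Fact (1 ≤ p)] {T : Lp ℝ p μ →L[ℝ] Lp ℝ p μ}

theorem coeFn_iterate_ae_eq_comp (hg : CondStar μ g) (hT : ∀ φ : Lp ℝ p μ, ⇑(T φ) =ᵐ[μ] ⇑φ ∘ g)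
    (k : ℕ) (u : Lp ℝ p μ) : ⇑((⇑T)^[k] u) =ᵐ[μ] ⇑u ∘ g^[k] := by
  induction k with
  | zero => rfl
  | succ k ih =>
    rw [Function.iterate_succ_apply', Function.iterate_succ]
    exact (hT _).trans (ih.comp_tendsto hg.tendsto_ae)

theorem exists_dist_iterate_eq_eLpNorm (hg : CondStar μ g)
    (hT : ∀ φ : Lp ℝ p μ, ⇑(T φ) =ᵐ[μ] ⇑φ ∘ g) {k : ℕ} {D E : Set X} (hDE : g^[k] ⁻¹' E = D)
    {F G : X → ℝ} (hF : F ∘ g^[k] = F) (hG : G ∘ g^[k] = G) {φ ψ : Lp ℝ p μ}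
    (hφ : φ =ᵐ[μ] F) (hψ : ψ =ᵐ[μ] G) (hmem : MemLp (E.indicator (G - F)) p μ) :
    ∃ u : Lp ℝ p μ, dist u φ = (eLpNorm (E.indicator (G - F)) p μ).toReal ∧
      dist ((⇑T)^[k] u) ψ = (eLpNorm (Dᶜ.indicator (G - F)) p μ).toReal := by
  set χ := hmem.toLp
  refine ⟨φ + χ, by rw [dist_eq_norm, add_sub_cancel_left, Lp.norm_toLp], ?_⟩
  have hpush : (E.indicator (G - F)) ∘ g^[k] = D.indicator (G - F) := by
    ext x
    rw [← hDE, Function.comp_apply, ← indicator_comp_right, Pi.sub_comp, hF, hG]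
  have hdiff : ⇑((⇑T)^[k] (φ + χ) - ψ) =ᵐ[μ] -Dᶜ.indicator (G - F) := by
    have hsum : ⇑(φ + χ) ∘ g^[k] =ᵐ[μ] F + D.indicator (G - F) := by
      have := ((Lp.coeFn_add φ χ).trans (hφ.add hmem.coeFn_toLp)).comp_tendsto
        (hg.tendsto_ae.iterate k)
      rwa [Pi.add_comp, hF, hpush] at this
    filter_upwards [Lp.coeFn_sub ((⇑T)^[k] (φ + χ)) ψ,
      (coeFn_iterate_ae_eq_comp hg hT k _).trans hsum, hψ] with x h₁ h₂ h₃
    rw [h₁, Pi.sub_apply, h₂, h₃, indicator_compl]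
    simp only [Pi.add_apply, Pi.sub_apply, Pi.neg_apply]
    ring
  rw [dist_eq_norm, Lp.norm_def, eLpNorm_congr_ae hdiff, eLpNorm_neg]

end CompositionOperator

section Odometer

variable {α : ℕ → ℕ}

/-- Adding `1` at digit `i`, with carry to the right. -/
def odometerFrom (α : ℕ → ℕ) (i : ℕ) (x : ∀ j, Fin (α j)) : ∀ j, Fin (α j) :=
  fun j =>
    if i ≤ j ∧ ∀ l < j, i ≤ l → (x l : ℕ) + 1 = α l
    then ⟨((x j : ℕ) + 1) % α j, Nat.mod_lt _ (x j).pos⟩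
    else x j

theorem odometerFrom_zero (α : ℕ → ℕ) : odometerFrom α 0 = odometer α := by
  funext x j
  simp only [odometerFrom, odometer, Nat.zero_le, true_and, forall_const]

theorem odometerFrom_apply_of_lt {i j : ℕ} (x : ∀ j, Fin (α j)) (h : j < i) :
    odometerFrom α i x j = x j :=
  if_neg fun hc => (h.trans_le hc.1).false

theorem val_odometerFrom_apply_self (i : ℕ) (x : ∀ j, Fin (α j)) :
    (odometerFrom α i x i : ℕ) = ((x i : ℕ) + 1) % α i := by
  rw [odometerFrom, if_pos ⟨le_rfl, fun l hl hil => absurd hl (not_lt.mpr hil)⟩]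

theorem odometerFrom_apply_of_gt_of_ne {i j : ℕ} {x : ∀ j, Fin (α j)} (hij : i < j)
    (hx : (x i : ℕ) + 1 ≠ α i) : odometerFrom α i x j = x j :=
  if_neg fun hc => hx (hc.2 i hij le_rfl)

theorem odometerFrom_apply_of_gt_of_eq {i j : ℕ} {x : ∀ j, Fin (α j)} (hij : i < j)
    (hx : (x i : ℕ) + 1 = α i) : odometerFrom α i x j = odometerFrom α (i + 1) x j := by
  refine if_congr ⟨fun hc => ⟨hij, fun l hl hil => hc.2 l hl (by omega)⟩,
    fun hc => ⟨hij.le, fun l hl hil => ?_⟩⟩ rfl rfl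
  rcases hil.eq_or_lt with rfl | hil
  · exact hx
  · exact hc.2 l hl hil

theorem odometerFrom_apply_congr {i j : ℕ} {x y : ∀ j, Fin (α j)} (h : ∀ l, i ≤ l → x l = y l)
    (hj : i ≤ j) : odometerFrom α i x j = odometerFrom α i y j := by
  have hcond : (∀ l < j, i ≤ l → (x l : ℕ) + 1 = α l) ↔ ∀ l < j, i ≤ l → (y l : ℕ) + 1 = α l :=
    forall₂_congr fun l _ => imp_congr_right fun hil => by rw [h l hil]
  simp only [odometerFrom, hcond, h j hj]

theorem iterate_odometerFrom_apply_of_lt {i j : ℕ} (x : ∀ j, Fin (α j)) (m : ℕ) (hj : j < i) :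
    (odometerFrom α i)^[m] x j = x j := by
  induction m with
  | zero => rfl
  | succ m ih => rw [Function.iterate_succ_apply', odometerFrom_apply_of_lt _ hj, ih]

theorem val_iterate_odometerFrom_apply_self (i : ℕ) (x : ∀ j, Fin (α j)) (m : ℕ) :
    ((odometerFrom α i)^[m] x i : ℕ) = ((x i : ℕ) + m) % α i := by
  induction m with
  | zero => exact (Nat.mod_eq_of_lt (x i).isLt).symm
  | succ m ih =>
    rw [Function.iterate_succ_apply', val_odometerFrom_apply_self, ih, Nat.mod_add_mod,
      Nat.add_assoc]

theorem iterate_odometerFrom_apply_of_gt {i j : ℕ} (x : ∀ j, Fin (α j)) {m : ℕ}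
    (hm : m ≤ α i) (hij : i < j) :
    (odometerFrom α i)^[m] x j = if α i ≤ (x i : ℕ) + m then odometerFrom α (i + 1) x j
      else x j := by
  induction m generalizing j with
  | zero => rw [if_neg (by have := (x i).isLt; omega)]; rfl
  | succ m ih =>
    have hxi := (x i).isLt
    have hval := val_iterate_odometerFrom_apply_self i x m
    rw [Function.iterate_succ_apply']
    by_cases hcarry : (x i : ℕ) + m + 1 = α i
    · rw [Nat.mod_eq_of_lt (by omega)] at hval
      rw [odometerFrom_apply_of_gt_of_eq hij (by omega), if_pos (by omega)]
      refine odometerFrom_apply_congr (fun l hl => ?_) hij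
      rw [ih (by omega) (by omega), if_neg (by omega)]
    · have hval' : ((odometerFrom α i)^[m] x i : ℕ) + 1 ≠ α i := by
        rcases Nat.lt_or_ge ((x i : ℕ) + m) (α i) with h | h
        · rw [hval, Nat.mod_eq_of_lt h]; omega
        · rw [hval, Nat.mod_eq_sub_mod h, Nat.mod_eq_of_lt (by omega)]; omega
      rw [odometerFrom_apply_of_gt_of_ne hij hval', ih (by omega) hij]
      exact if_congr (by omega) rfl rfl

theorem iterate_odometerFrom_length (i : ℕ) :
    (odometerFrom α i)^[α i] = odometerFrom α (i + 1) := by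
  funext x j
  rcases lt_trichotomy j i with hj | rfl | hj
  · rw [iterate_odometerFrom_apply_of_lt _ _ hj, odometerFrom_apply_of_lt _ (by omega)]
  · ext
    rw [val_iterate_odometerFrom_apply_self, odometerFrom_apply_of_lt _ (by omega),
      Nat.add_mod_right, Nat.mod_eq_of_lt (x j).isLt]
  · rw [iterate_odometerFrom_apply_of_gt _ le_rfl hj, if_pos (by omega)]

theorem iterate_odometer_prod_range (i : ℕ) :
    (odometer α)^[∏ j ∈ Finset.range i, α j] = odometerFrom α i := by
  induction i with
  | zero => rw [Finset.prod_range_zero, Function.iterate_one, odometerFrom_zero]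
  | succ i ih =>
    rw [Finset.prod_range_succ, Function.iterate_mul, ih, iterate_odometerFrom_length]

end Odometer

section ProductMeasure

variable {α : ℕ → ℕ} {w : ∀ i, Fin (α i) → ℝ≥0} {μ : Measure (∀ i, Fin (α i))}

theorem IsProductMeasure.isProbabilityMeasure (hμ : IsProductMeasure α w μ) :
    IsProbabilityMeasure μ :=
  ⟨by simpa using hμ 0 fun i => i.elim0⟩

theorem measurableSet_setOf_forall_fin_eq (n : ℕ) (a : ∀ i : Fin n, Fin (α i)) :
    MeasurableSet {x : ∀ i, Fin (α i) | ∀ i : Fin n, x i = a i} := by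
  simp only [ofPred_forall]
  exact MeasurableSet.iInter fun i => measurable_pi_apply _ (measurableSet_singleton _)

theorem IsProductMeasure.measure_setOf_apply_eq (hμ : IsProductMeasure α w μ)
    (hw : ∀ i, ∑ j, w i j = 1) (i : ℕ) (b : Fin (α i)) :
    μ {x | x i = b} = w i b := by
  classical
  let snocB (a : ∀ j : Fin i, Fin (α j)) : ∀ j : Fin (i + 1), Fin (α j) :=
    Fin.snoc (α := fun j : Fin (i + 1) => Fin (α j)) a b
  have hunion : {x : ∀ j, Fin (α j) | x i = b} =
      ⋃ a : ∀ j : Fin i, Fin (α j), {x | ∀ j : Fin (i + 1), x j = snocB a j} := by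
    ext x
    simp only [mem_ofPred_eq, mem_iUnion, Fin.forall_fin_succ', snocB, Fin.snoc_castSucc,
      Fin.snoc_last, Fin.val_last, Fin.val_castSucc]
    exact ⟨fun hx => ⟨fun j => x j, fun _ => rfl, hx⟩, fun ⟨_, _, hx⟩ => hx⟩
  have hdisj : Pairwise (Function.onFun Disjoint fun a =>
      {x : ∀ j, Fin (α j) | ∀ j : Fin (i + 1), x j = snocB a j}) := by
    refine fun a a' hne => disjoint_left.mpr fun x hx hx' => hne (funext fun j => ?_)
    simpa [snocB] using (hx j.castSucc).symm.trans (hx' j.castSucc)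
  have hsum : ∀ j : Fin i, ∑ c, (w j c : ℝ≥0∞) = 1 := fun j => by
    rw [← ENNReal.ofNNReal_finsetSum, hw, ENNReal.coe_one]
  rw [hunion, measure_iUnion hdisj fun a => measurableSet_setOf_forall_fin_eq _ _, tsum_fintype]
  calc ∑ a, μ {x | ∀ j : Fin (i + 1), x j = snocB a j}
      = ∑ a : ∀ j : Fin i, Fin (α j), (∏ j : Fin i, (w j (a j) : ℝ≥0∞)) * w i b :=
        Finset.sum_congr rfl fun a _ => by
          rw [hμ, Fin.prod_univ_castSucc]
          simp only [snocB, Fin.snoc_castSucc, Fin.snoc_last, Fin.val_last, Fin.val_castSucc]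
    _ = w i b := by
      rw [← Finset.sum_mul, ← Fintype.prod_sum fun (j : Fin i) c => (w j c : ℝ≥0∞),
        Finset.prod_congr rfl fun j _ => hsum j, Finset.prod_const_one, one_mul]

end ProductMeasure

section CylinderFunctions

variable (α : ℕ → ℕ) (μ : Measure (∀ i, Fin (α i))) (p : ℝ≥0∞)

def cylinderFunctions : AddSubgroup (Lp ℝ p μ) where
  carrier := {φ | ∃ n, ∃ F : (∀ i, Fin (α i)) → ℝ, Measurable F ∧ DependsOn F (Iio n) ∧ φ =ᵐ[μ] F}
  zero_mem' := ⟨0, 0, measurable_const, fun _ _ _ => rfl, Lp.coeFn_zero _ _ _⟩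
  add_mem' := by
    rintro φ ψ ⟨n₁, F, hFm, hF, hφ⟩ ⟨n₂, G, hGm, hG, hψ⟩
    refine ⟨max n₁ n₂, F + G, hFm.add hGm, fun x y h => ?_,
      (Lp.coeFn_add φ ψ).trans (hφ.add hψ)⟩
    rw [Pi.add_apply, Pi.add_apply,
      hF fun j hj => h j (Iio_subset_Iio (le_max_left _ _) hj),
      hG fun j hj => h j (Iio_subset_Iio (le_max_right _ _) hj)]
  neg_mem' := by
    rintro φ ⟨n, F, hFm, hF, hφ⟩
    exact ⟨n, -F, hFm.neg, fun x y h => by rw [Pi.neg_apply, Pi.neg_apply, hF h],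
      (Lp.coeFn_neg φ).trans hφ.neg⟩

theorem dense_cylinderFunctions [Fact (1 ≤ p)] [IsFiniteMeasure μ] (hp : p ≠ ⊤) :
    Dense (cylinderFunctions α μ p : Set (Lp ℝ p μ)) := by
  have : Fact (p ≠ ⊤) := ⟨hp⟩
  have halg : IsSetAlgebra (measurableCylinders fun i => Fin (α i)) :=
    ⟨empty_mem_measurableCylinders _, fun _ hs => compl_mem_measurableCylinders hs,
      fun _ _ hs ht => union_mem_measurableCylinders hs ht⟩
  have hdense : μ.MeasureDense (measurableCylinders fun i => Fin (α i)) :=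
    Measure.MeasureDense.of_generateFrom_isSetAlgebra_finite μ halg
      generateFrom_measurableCylinders.symm
  intro φ
  induction φ using Lp.induction hp with
  | @indicatorConst c s hs hμs =>
    refine closure_mono ?_ (hdense.indicatorConstLp_subset_closure p c ⟨s, hs, hμs.ne, rfl⟩)
    rintro - ⟨t, ht, -, rfl⟩
    obtain ⟨I, S, -, rfl⟩ := (mem_measurableCylinders t).mp ht
    refine ⟨I.sup id + 1, (cylinder I S).indicator fun _ => c,
      measurable_const.indicator (MeasurableSet.of_mem_measurableCylinders ht),
      (dependsOn_cylinder_indicator_const (α := fun i => Fin (α i)) S c).mono fun i hi => ?_,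
      indicatorConstLp_coeFn⟩
    exact Nat.lt_succ_of_le (Finset.le_sup (f := id) hi)
  | add _ _ _ hφ hψ => exact (cylinderFunctions α μ p).topologicalClosure.add_mem hφ hψ
  | isClosed => exact isClosed_closure

end CylinderFunctions

theorem frequently_exists_lt_of_limsup_iSup_eq_one {κ : ℕ → Type*} [∀ i, Nonempty (κ i)]
    {w : ∀ i, κ i → ℝ≥0} (h : limsup (fun i => ((⨆ j, w i j : ℝ≥0) : ℝ)) atTop = 1) {δ : ℝ}
    (hδ : 0 < δ) : ∃ᶠ i in atTop, ∃ j, 1 - δ < w i j := by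
  have hcobdd : IsCoboundedUnder (· ≤ ·) atTop fun i => ((⨆ j, w i j : ℝ≥0) : ℝ) :=
    (isBoundedUnder_of ⟨0, fun i => NNReal.coe_nonneg _⟩).isCobounded_le
  refine (frequently_lt_of_lt_limsup (b := 1 - δ) hcobdd (by linarith)).mono fun i hi => ?_
  rw [NNReal.coe_iSup] at hi
  exact exists_lt_of_lt_ciSup hi

theorem NNReal.coe_lt_of_sum_eq_one {ι : Type*} [Fintype ι] {w : ι → ℝ≥0} (hw : ∑ j, w j = 1)
    {b b' : ι} (hb : b' ≠ b) {δ : ℝ} (h : 1 - δ < w b) : (w b' : ℝ) < δ := by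
  classical
  have : w b' + w b ≤ 1 := by
    rw [← hw, ← Finset.sum_pair hb]
    exact Finset.sum_le_sum_of_subset (Finset.subset_univ _)
  have : (w b' : ℝ) + w b ≤ 1 := by exact_mod_cast this
  linarith

section OdometerMeasure

variable {α : ℕ → ℕ} {w : ∀ i, Fin (α i) → ℝ≥0} {μ : Measure (∀ i, Fin (α i))}

theorem preimage_iterate_odometer_setOf_apply_eq (i : ℕ) (b : Fin (α i)) :
    (odometer α)^[∏ j ∈ Finset.range i, α j] ⁻¹'
      {x | x i = ⟨((b : ℕ) + 1) % α i, Nat.mod_lt _ b.pos⟩} = {x | x i = b} := by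
  ext x
  simp only [mem_preimage, mem_ofPred_eq, iterate_odometer_prod_range, Fin.ext_iff,
    val_odometerFrom_apply_self]
  exact ⟨fun h => (Nat.ModEq.add_right_cancel' 1 h).eq_of_lt_of_lt (x i).isLt b.isLt,
    fun h => by rw [h]⟩

theorem exists_iterate_odometer_preimage_eq (hα : ∀ i, 2 ≤ α i) (hw : ∀ i, ∑ j, w i j = 1)
    (hμ : IsProductMeasure α w μ)
    (heta : limsup (fun i => ((⨆ j, w i j : ℝ≥0) : ℝ)) atTop = 1) (n : ℕ) {δ : ℝ}
    (hδ : 0 < δ) :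
    ∃ k, 1 ≤ k ∧ ∃ D E : Set (∀ i, Fin (α i)), MeasurableSet D ∧ MeasurableSet E ∧
      μ Dᶜ ≤ ENNReal.ofReal δ ∧ μ E ≤ ENNReal.ofReal δ ∧ (odometer α)^[k] ⁻¹' E = D ∧
      ∀ x, ∀ j < n, (odometer α)^[k] x j = x j := by
  have : ∀ i, Nonempty (Fin (α i)) := fun i => ⟨⟨0, by have := hα i; omega⟩⟩
  obtain ⟨i, hi, b, hb⟩ :=
    frequently_atTop.mp (frequently_exists_lt_of_limsup_iSup_eq_one heta hδ) n
  set b' : Fin (α i) := ⟨((b : ℕ) + 1) % α i, Nat.mod_lt _ b.pos⟩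
  have hb' : b' ≠ b := by
    intro h
    have hval : ((b : ℕ) + 1) % α i = b := congrArg Fin.val h
    have := hα i
    rcases Nat.lt_or_ge ((b : ℕ) + 1) (α i) with hlt | hge
    · rw [Nat.mod_eq_of_lt hlt] at hval; omega
    · rw [show (b : ℕ) + 1 = α i by omega, Nat.mod_self] at hval; omega
  have hmeas (c : Fin (α i)) : MeasurableSet {x : ∀ i, Fin (α i) | x i = c} :=
    measurableSet_singleton c |>.preimage (measurable_pi_apply i)
  have hk : 0 < ∏ j ∈ Finset.range i, α j := Finset.prod_pos fun j _ => by have := hα j; omega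
  refine ⟨∏ j ∈ Finset.range i, α j, hk,
    {x | x i = b}, {x | x i = b'}, hmeas b, hmeas b', ?_, ?_,
    preimage_iterate_odometer_setOf_apply_eq i b, fun x j hj => ?_⟩
  · have := hμ.isProbabilityMeasure
    rw [prob_compl_eq_one_sub (hmeas b), hμ.measure_setOf_apply_eq hw, tsub_le_iff_right,
      ← ENNReal.ofReal_coe_nnreal, ← ENNReal.ofReal_add hδ.le (NNReal.coe_nonneg _)]
    exact ENNReal.one_le_ofReal.mpr (by linarith)
  · rw [hμ.measure_setOf_apply_eq hw, ← ENNReal.ofReal_coe_nnreal]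
    exact ENNReal.ofReal_le_ofReal (NNReal.coe_lt_of_sum_eq_one (hw i) hb' hb).le
  · rw [iterate_odometer_prod_range, odometerFrom_apply_of_lt _ (hj.trans_le hi)]

end OdometerMeasure

theorem transitive_of_limsup_eta_eq_one_general
    (α : ℕ → ℕ) (hα : ∀ i, 2 ≤ α i)
    (w : ∀ i, Fin (α i) → NNReal)
    (hw_sum : ∀ i, ∑ j, w i j = 1)
    (μ : Measure (∀ i, Fin (α i))) (hμ : IsProductMeasure α w μ)
    (hstar : CondStar μ (odometer α))
    (p : ENNReal) [Fact (1 ≤ p)] (hp' : p ≠ ⊤)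
    (T : Lp ℝ p μ →L[ℝ] Lp ℝ p μ)
    (hT : ∀ φ : Lp ℝ p μ, ⇑(T φ) =ᵐ[μ] (⇑φ ∘ odometer α))
    (heta : Filter.limsup (fun i => ((⨆ j, w i j : NNReal) : ℝ)) atTop = 1) :
    TopTransitive ⇑T := by
  have := hμ.isProbabilityMeasure
  refine topTransitive_of_dense (dense_cylinderFunctions α μ p hp') ?_
  rintro φ ⟨n₁, F, hFm, hF, hφ⟩ ψ ⟨n₂, G, hGm, hG, hψ⟩ ε hε
  replace hF := hF.mono (Iio_subset_Iio (le_max_left n₁ n₂))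
  replace hG := hG.mono (Iio_subset_Iio (le_max_right n₁ n₂))
  have hGF : DependsOn (G - F) (Iio (max n₁ n₂)) := fun x y h => by
    rw [Pi.sub_apply, Pi.sub_apply, hF h, hG h]
  obtain ⟨M, hM⟩ := (hGF.finite_range.image norm).bddAbove
  have hGF_lt (x) : ‖(G - F) x‖ < M + 1 := (hM ⟨_, ⟨x, rfl⟩, rfl⟩).trans_lt (lt_add_one M)
  obtain ⟨δ, hδ, hsmall⟩ := eLpNorm_indicator_le_of_bound (μ := μ) hp' hε hGF_lt
  obtain ⟨k, hk, D, E, hD, hE, hμD, hμE, hDE, hfix⟩ :=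
    exists_iterate_odometer_preimage_eq hα hw_sum hμ heta (max n₁ n₂) hδ
  have hinv {H : (∀ i, Fin (α i)) → ℝ} (hH : DependsOn H (Iio (max n₁ n₂))) :
      H ∘ (odometer α)^[k] = H :=
    funext fun x => hH fun j hj => hfix x j hj
  have hmem : MemLp (E.indicator (G - F)) p μ :=
    .of_bound ((hGm.sub hFm).indicator hE).aestronglyMeasurable (M + 1)
      (.of_forall fun x => (norm_indicator_le_norm_self _ x).trans (hGF_lt x).le)
  obtain ⟨u, hu, hTu⟩ :=
    exists_dist_iterate_eq_eLpNorm hstar hT hDE (hinv hF) (hinv hG) hφ hψ hmem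
  exact ⟨k, hk, u, hu ▸ toReal_le_of_le_ofReal hε.le (hsmall E hE hμE),
    hTu ▸ toReal_le_of_le_ofReal hε.le (hsmall Dᶜ hD.compl hμD)⟩

/-- Transitivity sufficient condition: if `limsup_i η_i = 1`, then the composition
operator `T_f` on `L^p(μ)` is topologically transitive. -/
theorem transitive_of_limsup_eta_eq_one
    (α : ℕ → ℕ) (hα : ∀ i, 2 ≤ α i)
    (w : ∀ i, Fin (α i) → NNReal)
    (hw_pos : ∀ i j, 0 < w i j) (hw_sum : ∀ i, ∑ j, w i j = 1)
    (μ : Measure (∀ i, Fin (α i))) (hμ : IsProductMeasure α w μ)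
    (hstar : CondStar μ (odometer α))
    (p : ENNReal) [Fact (1 ≤ p)] (hp' : p ≠ ⊤)
    (T : Lp ℝ p μ →L[ℝ] Lp ℝ p μ)
    (hT : ∀ φ : Lp ℝ p μ, ⇑(T φ) =ᵐ[μ] (⇑φ ∘ odometer α))
    (heta : Filter.limsup (fun i => ((⨆ j, w i j : NNReal) : ℝ)) atTop = 1) :
    TopTransitive ⇑T :=
  transitive_of_limsup_eta_eq_one_general α hα w hw_sum μ hμ hstar p hp' T hT heta

end
end

section
/- Suppose {α_i} and {μ_i} are such that Condition (*) holds (so that T_f is a bounded linear operator). If the composition operator T_f : L^p(μ) → L^p(μ) is topologically transitive, then limsup_{n→∞} ρ_n = ∞, i.e., the sequence {ρ_n} is unbounded. -/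
open MeasureTheory Filter Set Topology ENNReal NNReal

noncomputable section

/-!
If `ρ_n ≤ M` for all `n`, any two cylinders of the same level have measures within a factor `M`
of each other. Every iterate `f^k` of the odometer permutes the cylinders of each level, so `μ` and
its push-forward under `f^k` are within a factor `M` of each other on cylinders, hence, by outer
regularity, on all sets. Thus `‖φ‖_p ≤ M^{1/p} ‖T_f^k φ‖_p` for all `k` and `φ`, and no orbit of
`T_f` can travel from a ball around a vector of norm `M^{1/p} + 2` into the unit ball.
-/

section Truncation

variable {E : ℕ → Type*}

def truncate (n : ℕ) (x : ∀ i, E i) : ∀ i : Fin n, E i := fun i => x i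

theorem truncate_eq_truncate_iff {n : ℕ} {x y : ∀ i, E i} :
    truncate n x = truncate n y ↔ ∀ i < n, x i = y i := by
  simp only [truncate, funext_iff, Fin.forall_iff]

theorem truncate_surjective [∀ i, Nonempty (E i)] (n : ℕ) :
    Function.Surjective (truncate (E := E) n) := by
  classical
  intro b
  refine ⟨fun i => if h : i < n then b ⟨i, h⟩ else Classical.arbitrary _, ?_⟩
  funext i
  simp [truncate, i.isLt]

def PermutesCylinders (F : (∀ i, E i) → ∀ i, E i) : Prop :=
  ∀ n x y, truncate n (F x) = truncate n (F y) ↔ truncate n x = truncate n y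

namespace PermutesCylinders

variable {F : (∀ i, E i) → ∀ i, E i}

theorem iterate (hF : PermutesCylinders F) (k : ℕ) : PermutesCylinders F^[k] := by
  induction k with
  | zero => exact fun _ _ _ => Iff.rfl
  | succ k ih =>
    intro n x y
    simp only [Function.iterate_succ_apply']
    exact (hF n _ _).trans (ih n x y)

theorem exists_equiv [∀ i, Nonempty (E i)] [∀ i, Finite (E i)] (hF : PermutesCylinders F)
    (n : ℕ) : ∃ Φ : (∀ i : Fin n, E i) ≃ (∀ i : Fin n, E i),
      ∀ x, truncate n (F x) = Φ (truncate n x) := by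
  let lift := Function.surjInv (truncate_surjective (E := E) n)
  have hlift (b : ∀ i : Fin n, E i) : truncate n (lift b) = b := Function.surjInv_eq _ b
  have hinj : Function.Injective fun b => truncate n (F (lift b)) := fun b b' h => by
    rw [← hlift b, ← hlift b']
    exact (hF n _ _).1 h
  exact ⟨Equiv.ofBijective _ (Finite.injective_iff_bijective.1 hinj),
    fun x => (hF n _ _).2 (hlift _).symm⟩

end PermutesCylinders

theorem IsOpen.eq_iUnion_truncate_preimage [∀ i, TopologicalSpace (E i)] {U : Set (∀ i, E i)}
    (hU : IsOpen U) : U = ⋃ n, truncate n ⁻¹' {b | truncate n ⁻¹' {b} ⊆ U} := by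
  refine subset_antisymm (fun x hx => ?_) (iUnion_subset fun n x hx => hx rfl)
  obtain ⟨I, u, hu, hIU⟩ := isOpen_pi_iff.1 hU x hx
  refine mem_iUnion.2 ⟨I.sup id + 1, fun y hy => hIU fun i hi => ?_⟩
  have hyx := truncate_eq_truncate_iff.1 hy i (Nat.lt_succ_of_le (Finset.le_sup (f := id) hi))
  exact hyx ▸ (hu i hi).2

theorem monotone_truncate_preimage (U : Set (∀ i, E i)) :
    Monotone fun n => truncate n ⁻¹' {b | truncate n ⁻¹' {b} ⊆ U} := by
  intro m n hmn x hx y hy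
  refine hx (truncate_eq_truncate_iff.2 fun i hi => ?_)
  exact truncate_eq_truncate_iff.1 hy i (hi.trans_le hmn)

end Truncation

theorem Measure.le_of_forall_isOpen {X : Type*} [MeasurableSpace X] [TopologicalSpace X]
    {μ ν : Measure X} [ν.OuterRegular] (h : ∀ U, IsOpen U → μ U ≤ ν U) : μ ≤ ν := by
  refine Measure.le_iff'.2 fun s => ?_
  rw [s.measure_eq_iInf_isOpen ν]
  exact le_iInf₂ fun U hsU => le_iInf fun hU => (measure_mono hsU).trans (h U hU)

section CylinderMeasures

variable {E : ℕ → Type*} [∀ i, MeasurableSpace (E i)]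

theorem measurable_truncate (n : ℕ) : Measurable (truncate (E := E) n) :=
  measurable_pi_lambda _ fun i => measurable_pi_apply i.1

variable [∀ i, MeasurableSingletonClass (E i)]

theorem PermutesCylinders.measurable [∀ i, Nonempty (E i)] [∀ i, Finite (E i)]
    {F : (∀ i, E i) → ∀ i, E i} (hF : PermutesCylinders F) : Measurable F := by
  refine measurable_pi_lambda _ fun i => ?_
  obtain ⟨Φ, hΦ⟩ := hF.exists_equiv (i + 1)
  have hcoord : (fun x => F x i) = fun x => Φ (truncate (i + 1) x) ⟨i, i.lt_succ_self⟩ :=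
    funext fun x => congrFun (hΦ x) ⟨i, i.lt_succ_self⟩
  rw [hcoord]
  exact (measurable_of_countable (fun b => Φ b ⟨i, i.lt_succ_self⟩)).comp (measurable_truncate _)

variable [∀ i, Countable (E i)]

theorem measure_truncate_preimage_le {μ ν : Measure (∀ i, E i)}
    (h : ∀ n a, μ (truncate n ⁻¹' {a}) ≤ ν (truncate n ⁻¹' {a}))
    (n : ℕ) (S : Set (∀ i : Fin n, E i)) : μ (truncate n ⁻¹' S) ≤ ν (truncate n ⁻¹' S) := by
  have hcyl (a : ∀ i : Fin n, E i) : MeasurableSet (truncate n ⁻¹' {a}) :=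
    measurable_truncate n (measurableSet_singleton a)
  rw [← tsum_measure_preimage_singleton S.to_countable fun a _ => hcyl a,
    ← tsum_measure_preimage_singleton S.to_countable fun a _ => hcyl a]
  exact ENNReal.tsum_le_tsum fun a => h n a

theorem Measure.le_of_forall_cylinder [∀ i, TopologicalSpace (E i)]
    {μ ν : Measure (∀ i, E i)} [ν.OuterRegular]
    (h : ∀ n a, μ (truncate n ⁻¹' {a}) ≤ ν (truncate n ⁻¹' {a})) : μ ≤ ν := by
  refine Measure.le_of_forall_isOpen fun U hU => ?_
  rw [hU.eq_iUnion_truncate_preimage, (monotone_truncate_preimage U).measure_iUnion,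
    (monotone_truncate_preimage U).measure_iUnion]
  exact iSup_mono fun n => measure_truncate_preimage_le h n _

end CylinderMeasures

section PermutesCylinders

variable {E : ℕ → Type*} [∀ i, MeasurableSpace (E i)] [∀ i, MeasurableSingletonClass (E i)]
  [∀ i, Nonempty (E i)] [∀ i, Finite (E i)] {F : (∀ i, E i) → ∀ i, E i}
  {μ : Measure (∀ i, E i)} {C : ℝ≥0}

theorem PermutesCylinders.exists_map_apply_cylinder (hF : PermutesCylinders F) (n : ℕ) :
    ∃ Ψ : (∀ i : Fin n, E i) → (∀ i : Fin n, E i),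
      ∀ a, μ.map F (truncate n ⁻¹' {a}) = μ (truncate n ⁻¹' {Ψ a}) := by
  obtain ⟨Φ, hΦ⟩ := hF.exists_equiv n
  refine ⟨Φ.symm, fun a => ?_⟩
  rw [Measure.map_apply hF.measurable (measurable_truncate n (measurableSet_singleton a))]
  congr 1
  ext x
  simp [hΦ x, Equiv.eq_symm_apply]

variable [∀ i, TopologicalSpace (E i)]

theorem PermutesCylinders.map_le_smul [μ.OuterRegular] (hF : PermutesCylinders F)
    (hcyl : ∀ n a b, μ (truncate n ⁻¹' {b}) ≤ C * μ (truncate n ⁻¹' {a})) :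
    μ.map F ≤ C • μ := by
  refine Measure.le_of_forall_cylinder fun n a => ?_
  obtain ⟨Ψ, hΨ⟩ := hF.exists_map_apply_cylinder (μ := μ) n
  rw [hΨ, Measure.coe_nnreal_smul_apply]
  exact hcyl n a (Ψ a)

theorem PermutesCylinders.le_smul_map [(μ.map F).OuterRegular] (hF : PermutesCylinders F)
    (hcyl : ∀ n a b, μ (truncate n ⁻¹' {b}) ≤ C * μ (truncate n ⁻¹' {a})) :
    μ ≤ C • μ.map F := by
  refine Measure.le_of_forall_cylinder fun n a => ?_
  obtain ⟨Ψ, hΨ⟩ := hF.exists_map_apply_cylinder (μ := μ) n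
  rw [Measure.coe_nnreal_smul_apply, hΨ]
  exact hcyl n (Ψ a) a

end PermutesCylinders

section Odometer

theorem odometer_apply_eq_iff {α : ℕ → ℕ} {x y : ∀ i, Fin (α i)} {i : ℕ}
    (h : ∀ j < i, x j = y j) : odometer α x i = odometer α y i ↔ x i = y i := by
  by_cases hx : ∀ j < i, (x j : ℕ) + 1 = α j
  · have hy : ∀ j < i, (y j : ℕ) + 1 = α j := fun j hj => h j hj ▸ hx j hj
    simp only [odometer, if_pos hx, if_pos hy, Fin.ext_iff]
    exact ⟨fun e => Nat.ModEq.eq_of_lt_of_lt (Nat.ModEq.add_right_cancel' 1 e) (x i).isLt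
      (y i).isLt, fun e => by rw [e]⟩
  · have hy : ¬ ∀ j < i, (y j : ℕ) + 1 = α j := fun hy => hx fun j hj => h j hj ▸ hy j hj
    simp only [odometer, if_neg hx, if_neg hy]

theorem odometer_permutesCylinders (α : ℕ → ℕ) : PermutesCylinders (odometer α) := by
  intro n x y
  simp only [truncate_eq_truncate_iff]
  induction n with
  | zero => simp
  | succ n ih =>
    rw [Nat.forall_lt_succ_right, Nat.forall_lt_succ_right, ih]
    exact and_congr_right odometer_apply_eq_iff

end Odometer

section ProductMeasure

variable {α : ℕ → ℕ} {w : ∀ i, Fin (α i) → ℝ≥0} {μ : Measure (∀ i, Fin (α i))}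

def weightRatio (w : ∀ i, Fin (α i) → ℝ≥0) (i : ℕ) : ℝ≥0 := (⨆ j, w i j) / ⨅ j, w i j

theorem le_weightRatio_mul {i : ℕ} (hw : ∀ j, 0 < w i j) (j j' : Fin (α i)) :
    w i j ≤ weightRatio w i * w i j' := by
  have : Nonempty (Fin (α i)) := ⟨j⟩
  obtain ⟨j₀, hj₀⟩ := Finite.exists_min (w i)
  have hinf : 0 < ⨅ j, w i j := (hw j₀).trans_le (le_ciInf hj₀)
  calc w i j ≤ ⨆ j, w i j := le_ciSup (Set.finite_range _).bddAbove j
    _ = weightRatio w i * ⨅ j, w i j := (div_mul_cancel₀ _ hinf.ne').symm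
    _ ≤ weightRatio w i * w i j' := mul_le_mul_right (ciInf_le (OrderBot.bddBelow _) j') _

theorem IsProductMeasure.measure_cylinder (hμ : IsProductMeasure α w μ)
    (n : ℕ) (a : ∀ i : Fin n, Fin (α i)) :
    μ (truncate n ⁻¹' {a}) = ∏ i : Fin n, (w i (a i) : ℝ≥0∞) := by
  rw [← hμ n a]
  congr 1
  ext x
  simp [truncate, funext_iff]

theorem IsProductMeasure.measure_cylinder_le (hμ : IsProductMeasure α w μ)
    (hw : ∀ i j, 0 < w i j) (n : ℕ) (a b : ∀ i : Fin n, Fin (α i)) :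
    μ (truncate n ⁻¹' {b}) ≤ (∏ i ∈ Finset.range n, weightRatio w i) * μ (truncate n ⁻¹' {a}) := by
  rw [hμ.measure_cylinder, hμ.measure_cylinder,
    ← Fin.prod_univ_eq_prod_range, ENNReal.ofNNReal_finsetProd, ← Finset.prod_mul_distrib]
  exact Finset.prod_le_prod' fun i _ => mod_cast le_weightRatio_mul (hw i) (b i) (a i)

end ProductMeasure

section CompositionOperator

variable {X : Type*} [MeasurableSpace X] {μ : Measure X} {G : Type*} [NormedAddCommGroup G]
  {p : ℝ≥0∞} {g : X → X}

theorem eLpNorm_le_of_le_smul_map (hg : AEMeasurable g μ) {f : X → G}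
    (hf : AEStronglyMeasurable f (μ.map g)) {c : ℝ≥0∞} (h : μ ≤ c • μ.map g) :
    eLpNorm f p μ ≤ c ^ (1 / p).toReal * eLpNorm (f ∘ g) p μ :=
  calc eLpNorm f p μ ≤ eLpNorm f p (c • μ.map g) := eLpNorm_mono_measure f h
    _ ≤ c ^ (1 / p).toReal • eLpNorm f p (μ.map g) := eLpNorm_smul_measure_le c f p _
    _ = c ^ (1 / p).toReal * eLpNorm (f ∘ g) p μ := by rw [eLpNorm_map_measure hf hg, smul_eq_mul]

theorem Lp.norm_le_mul_norm_of_ae_eq_comp (hg : Measure.QuasiMeasurePreserving g μ μ)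
    {c : ℝ≥0} (h : μ ≤ c • μ.map g) {ψ φ : Lp G p μ} (hφ : φ =ᵐ[μ] ψ ∘ g) :
    ‖ψ‖ ≤ ((c : ℝ≥0∞) ^ (1 / p).toReal).toReal * ‖φ‖ := by
  have hψ : AEStronglyMeasurable ψ (μ.map g) :=
    (Lp.aestronglyMeasurable ψ).mono_ac hg.absolutelyContinuous
  rw [Lp.norm_def, Lp.norm_def, ← ENNReal.toReal_mul]
  refine ENNReal.toReal_mono (mul_ne_top ?_ (Lp.eLpNorm_ne_top φ)) ?_
  · exact rpow_ne_top_of_nonneg ENNReal.toReal_nonneg coe_ne_top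
  · rw [eLpNorm_congr_ae hφ]
    exact eLpNorm_le_of_le_smul_map hg.aemeasurable hψ (by exact_mod_cast h)

theorem Lp.iterate_ae_eq_comp_iterate {f : X → X} (hf : Measure.QuasiMeasurePreserving f μ μ)
    {T : Lp G p μ → Lp G p μ} (hT : ∀ φ, T φ =ᵐ[μ] φ ∘ f) (k : ℕ) (φ : Lp G p μ) :
    T^[k] φ =ᵐ[μ] φ ∘ f^[k] := by
  induction k generalizing φ with
  | zero => rfl
  | succ k ih =>
    rw [Function.iterate_succ_apply, Function.iterate_succ' f]
    exact (ih (T φ)).trans ((hf.iterate k).ae_eq_comp (hT φ))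

theorem Lp.nontrivial_of_neZero [IsFiniteMeasure μ] [NeZero μ] [Fact (1 ≤ p)] :
    Nontrivial (Lp ℝ p μ) := by
  refine ⟨Lp.const p μ 1, 0, fun h => ?_⟩
  have hnorm := Lp.norm_const p μ (1 : ℝ) (zero_lt_one.trans_le Fact.out).ne'
  rw [h, norm_zero, norm_one, one_mul] at hnorm
  exact (Real.rpow_pos_of_pos measureReal_univ_pos _).ne' hnorm.symm

end CompositionOperator

theorem not_topTransitive_of_norm_le_mul_norm_iterate {V : Type*} [NormedAddCommGroup V]
    [NormedSpace ℝ V] [Nontrivial V] {T : V → V} {K : ℝ}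
    (h : ∀ k x, ‖x‖ ≤ K * ‖T^[k] x‖) : ¬ TopTransitive T := by
  intro htrans
  obtain ⟨x₀, hx₀⟩ := exists_norm_eq V (by positivity : 0 ≤ |K| + 2)
  obtain ⟨k, -, _, ⟨x, hx, rfl⟩, hTx⟩ := htrans _ _ Metric.isOpen_ball Metric.isOpen_ball
    ⟨x₀, Metric.mem_ball_self one_pos⟩ ⟨0, Metric.mem_ball_self one_pos⟩
  have hx_large : |K| + 1 < ‖x‖ := by
    rw [Metric.mem_ball, dist_eq_norm] at hx
    linarith [norm_sub_norm_le x₀ x, norm_sub_rev x x₀]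
  have hTx_small : ‖T^[k] x‖ < 1 := mem_ball_zero_iff.1 hTx
  nlinarith [h k x, le_abs_self K, abs_nonneg K, norm_nonneg (T^[k] x)]

theorem rho_unbounded_of_transitive_general
    (α : ℕ → ℕ)
    (w : ∀ i, Fin (α i) → NNReal)
    (hw_pos : ∀ i j, 0 < w i j)
    (μ : Measure (∀ i, Fin (α i))) (hμ : IsProductMeasure α w μ)
    (p : ENNReal) [Fact (1 ≤ p)]
    (T : Lp ℝ p μ →L[ℝ] Lp ℝ p μ)
    (hT : ∀ φ : Lp ℝ p μ, ⇑(T φ) =ᵐ[μ] (⇑φ ∘ odometer α))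
    (htrans : TopTransitive ⇑T) :
    ∀ M : ℝ, ∃ n : ℕ,
      M < ∏ i ∈ Finset.range (n + 1),
        (((⨆ j, w i j : NNReal) : ℝ) / ((⨅ j, w i j : NNReal) : ℝ)) := by
  by_contra! hbdd
  obtain ⟨M, hM⟩ := hbdd
  have := hμ.isProbabilityMeasure
  obtain ⟨x₀⟩ := nonempty_of_isProbabilityMeasure μ
  have (i : ℕ) : Nonempty (Fin (α i)) := ⟨x₀ i⟩
  let C : ℝ≥0 := ⟨max M 1, zero_le_one.trans (le_max_right _ _)⟩
  have hC (n : ℕ) : ∏ i ∈ Finset.range n, weightRatio w i ≤ C := by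
    rw [← NNReal.coe_le_coe, NNReal.coe_prod]
    cases n with
    | zero => exact le_max_right M 1
    | succ n =>
      simp only [weightRatio, NNReal.coe_div]
      exact (hM n).trans (le_max_left M 1)
  have hcyl (n : ℕ) (a b : ∀ i : Fin n, Fin (α i)) :
      μ (truncate n ⁻¹' {b}) ≤ C * μ (truncate n ⁻¹' {a}) :=
    (hμ.measure_cylinder_le hw_pos n a b).trans (by gcongr; exact_mod_cast hC n)
  have hf := odometer_permutesCylinders α
  have hqmp : Measure.QuasiMeasurePreserving (odometer α) μ μ :=
    ⟨hf.measurable, Measure.absolutelyContinuous_of_le_smul (hf.map_le_smul hcyl)⟩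
  have := Lp.nontrivial_of_neZero (μ := μ) (p := p)
  exact not_topTransitive_of_norm_le_mul_norm_iterate (fun k ψ =>
    Lp.norm_le_mul_norm_of_ae_eq_comp (hqmp.iterate k) ((hf.iterate k).le_smul_map hcyl)
      (Lp.iterate_ae_eq_comp_iterate hqmp hT k ψ)) htrans

/-- Transitivity necessary condition: if the composition operator `T_f` on `L^p(μ)` is
topologically transitive, then the sequence `ρ_n = ∏_{i=0}^n η_i/δ_i` is unbounded. -/
theorem rho_unbounded_of_transitive
    (α : ℕ → ℕ) (hα : ∀ i, 2 ≤ α i)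
    (w : ∀ i, Fin (α i) → NNReal)
    (hw_pos : ∀ i j, 0 < w i j) (hw_sum : ∀ i, ∑ j, w i j = 1)
    (μ : Measure (∀ i, Fin (α i))) (hμ : IsProductMeasure α w μ)
    (hstar : CondStar μ (odometer α))
    (p : ENNReal) [Fact (1 ≤ p)] (hp' : p ≠ ⊤)
    (T : Lp ℝ p μ →L[ℝ] Lp ℝ p μ)
    (hT : ∀ φ : Lp ℝ p μ, ⇑(T φ) =ᵐ[μ] (⇑φ ∘ odometer α))
    (htrans : TopTransitive ⇑T) :
    ∀ M : ℝ, ∃ n : ℕ,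
      M < ∏ i ∈ Finset.range (n + 1),
        (((⨆ j, w i j : NNReal) : ℝ) / ((⨅ j, w i j : NNReal) : ℝ)) :=
  rho_unbounded_of_transitive_general α w hw_pos μ hμ p T hT htrans
end
end

section
/- The family {μ_i} satisfies Condition (*) for the odometer f if and only if Condition (♦) holds, i.e., if and only if inf{ λ_l(j) · ∏_{i=0}^{l−1} λ_i(0) : l ≥ 1, j ∈ A_l } > 0. -/
open MeasureTheory Filter Set Topology ENNReal NNReal

noncomputable section

/-- `λ_i(j) = μ_i(j) / μ_i(j-1)`, where `j - 1` is interpreted cyclically in `A_i`. -/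
def lamCyc (α : ℕ → ℕ) (w : ∀ i, Fin (α i) → NNReal) (i : ℕ) (j : Fin (α i)) : NNReal :=
  w i j / w i ⟨((j : ℕ) + (α i - 1)) % α i, Nat.mod_lt _ j.pos⟩

/-- `λ_i(0) = μ_i(0) / μ_i(α_i - 1)`. -/
def lamZero (α : ℕ → ℕ) (hα : ∀ i, 0 < α i) (w : ∀ i, Fin (α i) → NNReal) (i : ℕ) : NNReal :=
  w i ⟨0, hα i⟩ / w i ⟨α i - 1, Nat.sub_lt (hα i) one_pos⟩

/-- Condition (♦): `inf { λ_l(j) · ∏_{i<l} λ_i(0) : l ≥ 1, j ∈ A_l } > 0`. -/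
def CondDiamond (α : ℕ → ℕ) (hα : ∀ i, 0 < α i) (w : ∀ i, Fin (α i) → NNReal) : Prop :=
  ∃ c : NNReal, 0 < c ∧ ∀ l : ℕ, 1 ≤ l → ∀ j : Fin (α l),
    c ≤ lamCyc α w l j * ∏ i ∈ Finset.range l, lamZero α hα w i

/-
The first `n` coordinates of `odometer α x` depend only on the first `n` coordinates of `x`, and
determine them, so the odometer maps each cylinder of length `n` onto a cylinder of length `n`.
The ratio of their measures is the product of `λ_i((f x)_i)` over the coordinates `i < n` reached
by the carry; if the carry stops at `l` this is `λ_l(j) ∏_{i<l} λ_i(0)`, the quantity in (♦).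
So (*) restricted to cylinders is (♦); the cases `l = 0` (finitely many values `λ_0(j)`) and
`n = 0` (the empty product) are absorbed by shrinking the constant.
Finite unions of cylinders form an algebra generating the σ-algebra, and an inequality between
finite measures passes from such an algebra to all measurable sets by approximation in measure.
-/

open scoped symmDiff

namespace MeasureTheory.Measure

variable {Ω : Type*} [mΩ : MeasurableSpace Ω] {μ ν : Measure Ω}

theorem le_of_forall_le_of_isSetAlgebra [IsFiniteMeasure μ] [IsFiniteMeasure ν]
    {C : Set (Set Ω)} (hC : IsSetAlgebra C) (hgen : mΩ = MeasurableSpace.generateFrom C)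
    (h : ∀ t ∈ C, ν t ≤ μ t) : ν ≤ μ := by
  refine le_iff.2 fun s hs => ENNReal.le_of_forall_pos_le_add fun ε hε _ => ?_
  obtain ⟨t, htC, hts⟩ := exists_measure_symmDiff_lt_of_generateFrom_isSetRing (μ := μ + ν)
    hC.isSetRing ⟨{univ}, countable_singleton _, by simpa using hC.univ_mem, by simp⟩ hgen hs
    (ε := ε) (by simpa using hε)
  have hν : ν s ≤ ν t + ν (t ∆ s) := by
    rw [symmDiff_comm]; exact tsub_le_iff_left.1 le_measure_symmDiff
  have hμ : μ t ≤ μ s + μ (t ∆ s) := tsub_le_iff_left.1 le_measure_symmDiff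
  calc ν s ≤ ν t + ν (t ∆ s) := hν
    _ ≤ μ s + μ (t ∆ s) + ν (t ∆ s) := by gcongr; exact (h t htC).trans hμ
    _ = μ s + (μ + ν) (t ∆ s) := by rw [add_apply, add_assoc]
    _ ≤ μ s + ε := by gcongr

theorem le_of_forall_singleton_le [Countable Ω] [MeasurableSingletonClass Ω]
    (h : ∀ a, ν {a} ≤ μ {a}) : ν ≤ μ := by
  refine le_iff.2 fun s hs => ?_
  rw [← tsum_indicator_apply_singleton ν s hs, ← tsum_indicator_apply_singleton μ s hs]
  exact ENNReal.tsum_le_tsum fun a => indicator_le_indicator (h a)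

end MeasureTheory.Measure

lemma Nat.add_sub_one_mod_add_one_mod {a m : ℕ} (ha : a < m) :
    ((a + (m - 1)) % m + 1) % m = a := by
  rw [Nat.mod_add_mod, show a + (m - 1) + 1 = a + m by omega, Nat.add_mod_right,
    Nat.mod_eq_of_lt ha]

lemma Nat.add_one_mod_add_sub_one_mod {a m : ℕ} (ha : a < m) :
    ((a + 1) % m + (m - 1)) % m = a := by
  rw [Nat.mod_add_mod, show a + 1 + (m - 1) = a + m by omega, Nat.add_mod_right,
    Nat.mod_eq_of_lt ha]

namespace Odometer

variable {α : ℕ → ℕ}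

def take (n : ℕ) (x : ∀ i, Fin (α i)) : ∀ i : Fin n, Fin (α i) := fun i => x i

lemma take_eq_take_iff {n : ℕ} {x y : ∀ i, Fin (α i)} :
    take n x = take n y ↔ ∀ i < n, x i = y i :=
  ⟨fun h i hi => congrFun h ⟨i, hi⟩, fun h => funext fun i => h i i.2⟩

lemma measurable_take (n : ℕ) : Measurable (take (α := α) n) :=
  measurable_pi_lambda _ fun i => measurable_pi_apply i.1

lemma preimage_take_image_take {n : ℕ} {t : Set (∀ i, Fin (α i))}
    (ht : ∀ x y, take n x = take n y → x ∈ t → y ∈ t) : take n ⁻¹' (take n '' t) = t :=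
  Subset.antisymm (fun _ ⟨x, hx, hxy⟩ => ht x _ hxy hx) (subset_preimage_image _ _)

lemma measurable_of_take_eq_take {β : Type*} [MeasurableSpace β] {n : ℕ}
    {g : (∀ i, Fin (α i)) → β} (hg : ∀ x y, take n x = take n y → g x = g y) : Measurable g :=
  fun s _ => by
    rw [← preimage_take_image_take (t := g ⁻¹' s) fun x y hxy hx => by
      rwa [mem_preimage, ← hg x y hxy]]
    exact measurable_take n (Set.toFinite _).measurableSet

lemma exists_eq_preimage_take {t : Set (∀ i, Fin (α i))}
    (ht : t ∈ measurableCylinders fun i => Fin (α i)) : ∃ n, take n ⁻¹' (take n '' t) = t := by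
  rw [measurableCylinders_nat] at ht
  simp only [mem_iUnion, mem_singleton_iff] at ht
  obtain ⟨N, S, -, rfl⟩ := ht
  refine ⟨N + 1, preimage_take_image_take fun x y hxy hx => ?_⟩
  have hres : (Finset.Iic N).restrict x = (Finset.Iic N).restrict y :=
    funext fun i => take_eq_take_iff.1 hxy i (Nat.lt_succ_of_le (Finset.mem_Iic.1 i.2))
  simpa [mem_cylinder, hres] using hx

lemma odometer_apply_of_carry {x : ∀ i, Fin (α i)} {i : ℕ} (h : ∀ j < i, (x j : ℕ) + 1 = α j) :
    (odometer α x i : ℕ) = ((x i : ℕ) + 1) % α i := by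
  unfold odometer; rw [if_pos h]

lemma odometer_apply_of_not_carry {x : ∀ i, Fin (α i)} {i : ℕ}
    (h : ¬ ∀ j < i, (x j : ℕ) + 1 = α j) : odometer α x i = x i := by
  unfold odometer; rw [if_neg h]

lemma odometer_apply_congr {x y : ∀ i, Fin (α i)} {i : ℕ} (h : ∀ j ≤ i, x j = y j) :
    odometer α x i = odometer α y i := by
  have hcarry : (∀ j < i, (x j : ℕ) + 1 = α j) ↔ ∀ j < i, (y j : ℕ) + 1 = α j :=
    forall₂_congr fun j hj => by rw [h j hj.le]
  by_cases hc : ∀ j < i, (x j : ℕ) + 1 = α j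
  · exact Fin.ext <| by
      rw [odometer_apply_of_carry hc, odometer_apply_of_carry (hcarry.1 hc), h i le_rfl]
  · rw [odometer_apply_of_not_carry hc, odometer_apply_of_not_carry (mt hcarry.2 hc), h i le_rfl]

lemma take_odometer_eq_take_odometer {n : ℕ} {x y : ∀ i, Fin (α i)} (h : take n x = take n y) :
    take n (odometer α x) = take n (odometer α y) := by
  rw [take_eq_take_iff] at h ⊢
  exact fun i hi => odometer_apply_congr fun j hj => h j (lt_of_le_of_lt hj hi)

lemma apply_eq_of_odometer_apply_eq {x y : ∀ i, Fin (α i)} {i : ℕ} (hlt : ∀ j < i, x j = y j)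
    (h : odometer α x i = odometer α y i) : x i = y i := by
  have hcarry : (∀ j < i, (x j : ℕ) + 1 = α j) ↔ ∀ j < i, (y j : ℕ) + 1 = α j :=
    forall₂_congr fun j hj => by rw [hlt j hj]
  by_cases hc : ∀ j < i, (x j : ℕ) + 1 = α j
  · have hval := congrArg (fun v : Fin (α i) => ((v : ℕ) + (α i - 1)) % α i) h
    simp only [odometer_apply_of_carry hc, odometer_apply_of_carry (hcarry.1 hc),
      Nat.add_one_mod_add_sub_one_mod (x i).isLt, Nat.add_one_mod_add_sub_one_mod (y i).isLt]
      at hval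
    exact Fin.ext hval
  · rwa [odometer_apply_of_not_carry hc, odometer_apply_of_not_carry (mt hcarry.2 hc)] at h

lemma take_eq_of_take_odometer_eq {n : ℕ} {x y : ∀ i, Fin (α i)}
    (h : take n (odometer α x) = take n (odometer α y)) : take n x = take n y := by
  rw [take_eq_take_iff] at h ⊢
  intro i
  induction i using Nat.strong_induction_on with
  | _ i ih => exact fun hi =>
      apply_eq_of_odometer_apply_eq (fun j hj => ih j hj (hj.trans hi)) (h i hi)

lemma preimage_odometer_take (n : ℕ) (x : ∀ i, Fin (α i)) :
    odometer α ⁻¹' (take n ⁻¹' {take n (odometer α x)}) = take n ⁻¹' {take n x} := by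
  ext y
  exact ⟨take_eq_of_take_odometer_eq, take_odometer_eq_take_odometer⟩

lemma measurable_odometer : Measurable (odometer α) :=
  measurable_pi_iff.2 fun i => measurable_of_take_eq_take (n := i + 1) fun _ _ h =>
    odometer_apply_congr fun j hj => take_eq_take_iff.1 h j (Nat.lt_succ_of_le hj)

lemma exists_carry_odometer_eq (hα : ∀ i, 0 < α i) (l : ℕ) (j : Fin (α l)) :
    ∃ x : ∀ i, Fin (α i), (∀ i < l, (x i : ℕ) + 1 = α i) ∧ odometer α x l = j := by
  let x := Function.update (fun i => (⟨α i - 1, Nat.sub_lt (hα i) one_pos⟩ : Fin (α i))) l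
    ⟨((j : ℕ) + (α l - 1)) % α l, Nat.mod_lt _ j.pos⟩
  have hcarry : ∀ i < l, (x i : ℕ) + 1 = α i := fun i hi => by
    simp only [x, Function.update_of_ne hi.ne]
    have := hα i; omega
  refine ⟨x, hcarry, Fin.ext ?_⟩
  rw [odometer_apply_of_carry hcarry, show x l = _ from Function.update_self .., Fin.val_mk,
    Nat.add_sub_one_mod_add_one_mod j.isLt]

variable {w : ∀ i, Fin (α i) → ℝ≥0} {μ : Measure (∀ i, Fin (α i))}

def carryFactor (w : ∀ i, Fin (α i) → ℝ≥0) (x : ∀ i, Fin (α i)) (i : ℕ) : ℝ≥0 :=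
  if ∀ j < i, (x j : ℕ) + 1 = α j then lamCyc α w i (odometer α x i) else 1

lemma weight_odometer_apply (hw : ∀ i j, 0 < w i j) (x : ∀ i, Fin (α i)) (i : ℕ) :
    w i (odometer α x i) = carryFactor w x i * w i (x i) := by
  unfold carryFactor
  split_ifs with hc
  · have hpred : (⟨((odometer α x i : ℕ) + (α i - 1)) % α i, Nat.mod_lt _ (x i).pos⟩ : Fin (α i))
        = x i :=
      Fin.ext <| by
        rw [Fin.val_mk, odometer_apply_of_carry hc, Nat.add_one_mod_add_sub_one_mod (x i).isLt]
    rw [lamCyc, hpred, div_mul_cancel₀ _ (hw _ _).ne']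
  · rw [odometer_apply_of_not_carry hc, one_mul]

lemma lamCyc_zero (hα : ∀ i, 0 < α i) (i : ℕ) : lamCyc α w i ⟨0, hα i⟩ = lamZero α hα w i := by
  have hmax : (⟨(0 + (α i - 1)) % α i, Nat.mod_lt _ (hα i)⟩ : Fin (α i))
      = ⟨α i - 1, Nat.sub_lt (hα i) one_pos⟩ :=
    Fin.ext <| by rw [Fin.val_mk, zero_add, Nat.mod_eq_of_lt (Nat.sub_lt (hα i) one_pos)]
  exact congrArg (fun j => w i ⟨0, hα i⟩ / w i j) hmax

lemma prod_carryFactor_of_carry (hα : ∀ i, 0 < α i) {x : ∀ i, Fin (α i)} {n : ℕ}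
    (h : ∀ j < n, (x j : ℕ) + 1 = α j) :
    ∏ i ∈ Finset.range (n + 1), carryFactor w x i
      = lamCyc α w n (odometer α x n) * ∏ i ∈ Finset.range n, lamZero α hα w i := by
  rw [Finset.prod_range_succ, mul_comm, carryFactor, if_pos h]
  congr 1
  refine Finset.prod_congr rfl fun i hi => ?_
  have hi : i < n := Finset.mem_range.1 hi
  have hci : ∀ j < i, (x j : ℕ) + 1 = α j := fun j hj => h j (hj.trans hi)
  have hzero : odometer α x i = ⟨0, hα i⟩ :=
    Fin.ext <| by rw [odometer_apply_of_carry hci, h i hi, Nat.mod_self]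
  rw [carryFactor, if_pos hci, hzero, lamCyc_zero]

lemma le_prod_carryFactor (hα : ∀ i, 0 < α i) {c : ℝ≥0} (hc₁ : c ≤ 1)
    (hc : ∀ l j, c ≤ lamCyc α w l j * ∏ i ∈ Finset.range l, lamZero α hα w i)
    (x : ∀ i, Fin (α i)) : ∀ n, c ≤ ∏ i ∈ Finset.range n, carryFactor w x i
  | 0 => by simpa using hc₁
  | n + 1 => by
    by_cases hn : ∀ j < n, (x j : ℕ) + 1 = α j
    · rw [prod_carryFactor_of_carry hα hn]
      exact hc _ _
    · rw [Finset.prod_range_succ, carryFactor, if_neg hn, mul_one]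
      exact le_prod_carryFactor hα hc₁ hc x n

lemma measure_preimage_take_singleton (hμ : IsProductMeasure α w μ) (n : ℕ)
    (a : ∀ i : Fin n, Fin (α i)) : μ (take n ⁻¹' {a}) = ∏ i : Fin n, (w i (a i) : ℝ≥0∞) := by
  rw [← hμ n a]
  congr 1
  ext x
  simp [take, funext_iff]

lemma isProbabilityMeasure_of_isProductMeasure (hμ : IsProductMeasure α w μ) :
    IsProbabilityMeasure μ :=
  ⟨by simpa using hμ 0 finZeroElim⟩

lemma measure_take_odometer (hμ : IsProductMeasure α w μ) (hw : ∀ i j, 0 < w i j) (n : ℕ)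
    (x : ∀ i, Fin (α i)) :
    μ (take n ⁻¹' {take n (odometer α x)})
      = (∏ i ∈ Finset.range n, carryFactor w x i : ℝ≥0) * μ (take n ⁻¹' {take n x}) := by
  simp only [measure_preimage_take_singleton hμ, take]
  rw [Fin.prod_univ_eq_prod_range (fun i => (w i (odometer α x i) : ℝ≥0∞)),
    Fin.prod_univ_eq_prod_range (fun i => (w i (x i) : ℝ≥0∞)), ENNReal.ofNNReal_finsetProd,
    ← Finset.prod_mul_distrib]
  exact Finset.prod_congr rfl fun i _ => by rw [weight_odometer_apply hw, ENNReal.coe_mul]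

lemma toNNReal_le_prod_carryFactor (hμ : IsProductMeasure α w μ) (hw : ∀ i j, 0 < w i j) {c : ℝ}
    (hc : ∀ B, MeasurableSet B → ENNReal.ofReal c * μ (odometer α ⁻¹' B) ≤ μ B)
    (n : ℕ) (x : ∀ i, Fin (α i)) : c.toNNReal ≤ ∏ i ∈ Finset.range n, carryFactor w x i := by
  have hB := hc _ (measurable_take n (measurableSet_singleton (take n (odometer α x))))
  rw [preimage_odometer_take, measure_take_odometer hμ hw] at hB
  have hpos : μ (take n ⁻¹' {take n x}) ≠ 0 := by
    rw [measure_preimage_take_singleton hμ]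
    exact Finset.prod_ne_zero_iff.2 fun i _ => ENNReal.coe_ne_zero.2 (hw _ _).ne'
  have := isProbabilityMeasure_of_isProductMeasure hμ
  exact ENNReal.coe_le_coe.1 ((ENNReal.mul_le_mul_iff_left hpos (measure_ne_top _ _)).1 hB)

lemma measure_preimage_odometer_take_le (hμ : IsProductMeasure α w μ) (hw : ∀ i j, 0 < w i j)
    {c : ℝ≥0} (hc : ∀ n x, c ≤ ∏ i ∈ Finset.range n, carryFactor w x i) (n : ℕ)
    (T : Set (∀ i : Fin n, Fin (α i))) :
    c * μ (odometer α ⁻¹' (take n ⁻¹' T)) ≤ μ (take n ⁻¹' T) := by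
  have hmeas : Measurable (take n ∘ odometer α) := (measurable_take n).comp measurable_odometer
  suffices h : (c : ℝ≥0∞) • μ.map (take n ∘ odometer α) ≤ μ.map (take n) by
    simpa [Measure.map_apply hmeas, Measure.map_apply (measurable_take n),
      (Set.toFinite T).measurableSet, preimage_comp] using Measure.le_iff'.1 h T
  refine Measure.le_of_forall_singleton_le fun b => ?_
  rw [Measure.smul_apply, Measure.map_apply hmeas (measurableSet_singleton b),
    Measure.map_apply (measurable_take n) (measurableSet_singleton b), smul_eq_mul, preimage_comp]
  by_cases hb : ∃ x, take n (odometer α x) = b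
  · obtain ⟨x, rfl⟩ := hb
    rw [preimage_odometer_take, measure_take_odometer hμ hw]
    gcongr
    exact_mod_cast hc n x
  · have hempty : odometer α ⁻¹' (take n ⁻¹' {b}) = ∅ :=
      eq_empty_iff_forall_notMem.2 fun x hx => hb ⟨x, hx⟩
    simp [hempty]

lemma condStar_of_le_prod_carryFactor (hμ : IsProductMeasure α w μ) (hw : ∀ i j, 0 < w i j)
    {c : ℝ≥0} (hc₀ : 0 < c) (hc : ∀ n x, c ≤ ∏ i ∈ Finset.range n, carryFactor w x i) :
    CondStar μ (odometer α) := by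
  have := isProbabilityMeasure_of_isProductMeasure hμ
  have hle : c • μ.map (odometer α) ≤ μ :=
    Measure.le_of_forall_le_of_isSetAlgebra isSetAlgebra_measurableCylinders
      generateFrom_measurableCylinders.symm fun t ht => by
        obtain ⟨n, hn⟩ := exists_eq_preimage_take ht
        rw [← hn, Measure.smul_apply, ENNReal.smul_def, smul_eq_mul,
          Measure.map_apply measurable_odometer (measurable_take n (Set.toFinite _).measurableSet)]
        exact measure_preimage_odometer_take_le hμ hw hc n _
  refine ⟨c, hc₀, fun B hB => ?_⟩
  simpa [Measure.map_apply measurable_odometer hB] using Measure.le_iff.1 hle B hB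

lemma exists_le_lamCyc_mul_prod_lamZero (hα : ∀ i, 0 < α i) (hw : ∀ i j, 0 < w i j)
    (h : CondDiamond α hα w) : ∃ c : ℝ≥0, 0 < c ∧ c ≤ 1 ∧
      ∀ l j, c ≤ lamCyc α w l j * ∏ i ∈ Finset.range l, lamZero α hα w i := by
  obtain ⟨c, hc, hdiamond⟩ := h
  have : Nonempty (Fin (α 0)) := ⟨⟨0, hα 0⟩⟩
  obtain ⟨j₀, hj₀⟩ := Finite.exists_min (lamCyc α w 0)
  refine ⟨min (min c 1) (lamCyc α w 0 j₀), lt_min (lt_min hc one_pos) (div_pos (hw _ _) (hw _ _)),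
    (min_le_left _ _).trans (min_le_right _ _), fun l j => ?_⟩
  rcases l with _ | l
  · rw [Finset.prod_range_zero, mul_one]
    exact (min_le_right _ _).trans (hj₀ j)
  · exact ((min_le_left _ _).trans (min_le_left _ _)).trans (hdiamond _ l.succ_pos j)

end Odometer

/-- Condition (*) for the odometer holds if and only if Condition (♦) holds. -/
theorem condStar_iff_condDiamond
    (α : ℕ → ℕ) (hα : ∀ i, 2 ≤ α i)
    (w : ∀ i, Fin (α i) → NNReal)
    (hw_pos : ∀ i j, 0 < w i j)
    (μ : Measure (∀ i, Fin (α i))) (hμ : IsProductMeasure α w μ) :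
    CondStar μ (odometer α) ↔
      CondDiamond α (fun i => by have := hα i; omega) w := by
  have hα₀ : ∀ i, 0 < α i := fun i => by have := hα i; omega
  constructor
  · rintro ⟨c, hc, hstar⟩
    refine ⟨c.toNNReal, Real.toNNReal_pos.2 hc, fun l _ j => ?_⟩
    obtain ⟨x, hcarry, rfl⟩ := Odometer.exists_carry_odometer_eq hα₀ l j
    rw [← Odometer.prod_carryFactor_of_carry hα₀ hcarry]
    exact Odometer.toNNReal_le_prod_carryFactor hμ hw_pos hstar (l + 1) x
  · intro hdiamond
    obtain ⟨c, hc₀, hc₁, hc⟩ := Odometer.exists_le_lamCyc_mul_prod_lamZero hα₀ hw_pos hdiamond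
    exact Odometer.condStar_of_le_prod_carryFactor hμ hw_pos hc₀ fun n x =>
      Odometer.le_prod_carryFactor hα₀ hc₁ hc x n
end
end
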